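/- Let (M, ∘, e) be an F-manifold of dimension n, X₀ a vector field whose ∘-powers {X₀, …, X₀ⁿ} form a frame of TM, and let S̃ be the special family of all torsion-free, ∘-compatible connections satisfying ∇̃_Y(X₀)∘Z = ∇̃_Z(X₀)∘Y. Let ε be an eventual identity with dual multiplication X*Y := X∘Y∘ε^{-1}. Then the dual family D_ε(S̃) equals the special family of all compatible, torsion-free connections ∇ on the dual F-manifold (M, *, ε) satisfying ∇_Y(ε∘X₀) * Z = ∇_Z(ε∘X₀) * Y for all vector fields Y, Z. -/

import Mathlib

/-- An algebraic model of the geometric setting of the paper: `R` plays the role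
of the ring `C^∞(M)` of smooth functions on a manifold `M`, and `V` plays the
role of the `C^∞(M)`-module of smooth vector fields on `M`, equipped with its
Lie bracket and with the action of vector fields on functions by derivations. -/
structure SmoothSetting (R V : Type*) [CommRing R] [LieRing V] [Module R V] where
  /-- the action `X(f)` of a vector field `X` on a function `f` -/
  deriv : V → R → R
  deriv_add : ∀ (X : V) (f g : R), deriv X (f + g) = deriv X f + deriv X g
  deriv_mul : ∀ (X : V) (f g : R), deriv X (f * g) = deriv X f * g + f * deriv X g
  add_deriv : ∀ (X Y : V) (f : R), deriv (X + Y) f = deriv X f + deriv Y f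
  smul_deriv : ∀ (f : R) (X : V) (g : R), deriv (f • X) g = f * deriv X g
  bracket_deriv : ∀ (X Y : V) (f : R),
    deriv ⁅X, Y⁆ f = deriv X (deriv Y f) - deriv Y (deriv X f)
  bracket_smul : ∀ (X : V) (f : R) (Y : V), ⁅X, f • Y⁆ = f • ⁅X, Y⁆ + deriv X f • Y

/-- `(m, e)` is an F-manifold structure: `m` is a fiber-preserving (i.e.
`C^∞(M)`-bilinear) commutative associative multiplication on vector fields with
unit field `e`, satisfying the Hertling–Manin integrability condition
`L_{X∘Y}(∘) = X ∘ L_Y(∘) + Y ∘ L_X(∘)`. -/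
structure IsFManifold (R : Type*) {V : Type*} [CommRing R] [LieRing V] [Module R V]
    (m : V → V → V) (e : V) : Prop where
  add_left : ∀ X Y Z : V, m (X + Y) Z = m X Z + m Y Z
  smul_left : ∀ (f : R) (X Y : V), m (f • X) Y = f • m X Y
  comm : ∀ X Y : V, m X Y = m Y X
  assoc : ∀ X Y Z : V, m (m X Y) Z = m X (m Y Z)
  unit : ∀ X : V, m e X = X
  hertling_manin : ∀ X Y Z W : V,
    ⁅m X Y, m Z W⁆ - m ⁅m X Y, Z⁆ W - m Z ⁅m X Y, W⁆ =
      m X (⁅Y, m Z W⁆ - m ⁅Y, Z⁆ W - m Z ⁅Y, W⁆)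
        + m Y (⁅X, m Z W⁆ - m ⁅X, Z⁆ W - m Z ⁅X, W⁆)

/-- The dual multiplication `X * Y := X ∘ Y ∘ ε⁻¹` determined by an invertible
vector field `ε` with inverse `εinv`. -/
def dualMul {V : Type*} (m : V → V → V) (εinv : V) : V → V → V :=
  fun X Y => m (m X Y) εinv

/-- `ε` (with inverse `εinv`) is an eventual identity on the F-manifold `(m, e)`:
it is invertible and the dual multiplication `X * Y = X ∘ Y ∘ ε⁻¹` defines an
F-manifold structure on `M` with unit field `ε`. -/
def IsEventualIdentity (R : Type*) {V : Type*} [CommRing R] [LieRing V] [Module R V]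
    (m : V → V → V) (e ε εinv : V) : Prop :=
  m ε εinv = e ∧ IsFManifold R (dualMul m εinv) ε

/-- `nabla` is a (Koszul) connection on the tangent bundle, i.e. on vector fields. -/
structure IsConnection {R V : Type*} [CommRing R] [LieRing V] [Module R V]
    (S : SmoothSetting R V) (nabla : V → V → V) : Prop where
  add_left : ∀ X Y Z : V, nabla (X + Y) Z = nabla X Z + nabla Y Z
  smul_left : ∀ (f : R) (X Y : V), nabla (f • X) Y = f • nabla X Y
  add_right : ∀ X Y Z : V, nabla X (Y + Z) = nabla X Y + nabla X Z
  leibniz : ∀ (X : V) (f : R) (Y : V), nabla X (f • Y) = S.deriv X f • Y + f • nabla X Y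

/-- `nabla` is torsion-free. -/
def IsTorsionFree {V : Type*} [LieRing V] (nabla : V → V → V) : Prop :=
  ∀ X Y, nabla X Y - nabla Y X = ⁅X, Y⁆

/-- The covariant derivative `∇_X(∘)(Y, Z)` of a multiplication `m` with respect
to a connection `nabla`. -/
def covMul {V : Type*} [LieRing V] (nabla m : V → V → V) (X Y Z : V) : V :=
  nabla X (m Y Z) - m (nabla X Y) Z - m Y (nabla X Z)

/-- `nabla` is compatible with the multiplication `m`: the vector valued tensor
`∇(∘)` is totally symmetric. -/
def IsCompatible {V : Type*} [LieRing V] (nabla m : V → V → V) : Prop :=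
  ∀ X Y Z, covMul nabla m X Y Z = covMul nabla m Y X Z ∧
    covMul nabla m X Y Z = covMul nabla m X Z Y

/-- The curvature `R^∇_{X,Y}Z = ∇_X∇_Y Z − ∇_Y∇_X Z − ∇_{[X,Y]}Z`. -/
def curv {V : Type*} [LieRing V] (nabla : V → V → V) (X Y Z : V) : V :=
  nabla X (nabla Y Z) - nabla Y (nabla X Z) - nabla ⁅X, Y⁆ Z

/-- `nabla` is flat. -/
def IsFlat {V : Type*} [LieRing V] (nabla : V → V → V) : Prop :=
  ∀ X Y Z, curv nabla X Y Z = 0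

/-- The curvature condition
`V∘R_{Z,Y}X + Y∘R_{V,Z}X + Z∘R_{Y,V}X = 0` of Lorenzoni–Pedroni. -/
def CurvCircCond {V : Type*} [LieRing V] (m nabla : V → V → V) : Prop :=
  ∀ X Y Z W, m W (curv nabla Z Y X) + m Y (curv nabla W Z X)
    + m Z (curv nabla Y W X) = 0

/-- A special family of connections on the F-manifold `(m, e)`: the family of
all `∇̃^V_X(Y) = ∇̃_X(Y) + V∘X∘Y`, `V` a vector field, where `∇̃` is some
torsion-free connection compatible with `m`. -/
def IsSpecialFamily {R V : Type*} [CommRing R] [LieRing V] [Module R V]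
    (S : SmoothSetting R V) (m : V → V → V) (SF : Set (V → V → V)) : Prop :=
  ∃ nt : V → V → V, IsConnection S nt ∧ IsTorsionFree nt ∧ IsCompatible nt m ∧
    SF = { n | ∃ W : V, n = fun X Y => nt X Y + m (m W X) Y }

/-- The connection `∇^W_X(Y) = ε∘∇̃_X(ε⁻¹∘Y) − ∇̃_{ε⁻¹∘Y}(ε)∘X + W*X*Y` on the
dual F-manifold, where `*` is the dual multiplication. -/
def dualConn {V : Type*} [LieRing V] (m : V → V → V) (ε εinv : V)
    (nt : V → V → V) (W : V) : V → V → V :=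
  fun X Y => m ε (nt X (m εinv Y)) - m (nt (m εinv Y) ε) X
    + dualMul m εinv (dualMul m εinv W X) Y

/-- The dual family `D_ε(S̃)` built from a chosen connection `nt ∈ S̃`. -/
def dualFamily {V : Type*} [LieRing V] (m : V → V → V) (ε εinv : V)
    (nt : V → V → V) : Set (V → V → V) :=
  { n | ∃ W : V, n = dualConn m ε εinv nt W }

/-- The dual family `D_ε(S̃)` of a family of connections `S̃`. -/
def dualFamilyOfSet {V : Type*} [LieRing V] (m : V → V → V) (ε εinv : V)
    (SF : Set (V → V → V)) : Set (V → V → V) :=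
  { n | ∃ nt ∈ SF, ∃ W : V, n = dualConn m ε εinv nt W }

/-- The second structure connection
`∇^F_X(Y) = ε∘∇̃_X(ε⁻¹∘Y) − ∇̃_{ε⁻¹∘Y}(ε)∘X` of `(M, ∘, e, ε, ∇̃)`. -/
def secondConn {V : Type*} [LieRing V] (m : V → V → V) (ε εinv : V)
    (nt : V → V → V) : V → V → V :=
  fun X Y => m ε (nt X (m εinv Y)) - m (nt (m εinv Y) ε) X

/-- The connection
`∇_X(Y) = ε∘∇̃_X(ε⁻¹∘Y) − ∇̃_{ε⁻¹∘Y}(ε)∘X + (1/2)[ε⁻¹,ε]∘X∘Y + U*X*Y`. -/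
def uDualConn {V : Type*} [LieRing V] [Module ℚ V] (m : V → V → V)
    (ε εinv U : V) (nt : V → V → V) : V → V → V :=
  fun X Y => secondConn m ε εinv nt X Y + (2 : ℚ)⁻¹ • m (m ⁅εinv, ε⁆ X) Y
    + dualMul m εinv (dualMul m εinv U X) Y

/-- The `k`-th power `X^k` of a vector field with respect to the multiplication
`m` with unit `e`. -/
def mpow {V : Type*} (m : V → V → V) (e X : V) : ℕ → V
  | 0 => e
  | k + 1 => m X (mpow m e X k)

/-- The Legendre transformation `L_u(S̃) = { u⁻¹∘∇̃_X(u∘Y) : ∇̃ ∈ S̃ }` of a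
family of connections `S̃` by an invertible vector field `u` (with inverse
`uinv`). -/
def legFamily {V : Type*} (m : V → V → V) (uinv u : V)
    (SF : Set (V → V → V)) : Set (V → V → V) :=
  { n | ∃ nt ∈ SF, n = fun X Y => m uinv (nt X (m u Y)) }

/-! Conjugation by `ε` turns a torsion-free `∘`-compatible connection `∇̃` into the second structure
connection `∇^F_X(Y) = ε∘∇̃_X(ε⁻¹∘Y) − ∇̃_{ε⁻¹∘Y}(ε)∘X`, which is torsion-free and `*`-compatible;
the eventual identity enters through `L_ε(∘) = [e, ε]∘`, which is `L_ε(*) = 0` read in terms of `∘`.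
The condition on `∇̃_Y(X₀)` becomes the same condition on `∇^F_Y(ε∘X₀)`, and the `*`-powers of
`ε∘X₀` are `ε∘X₀ᵏ`, so they form a frame as well.

Conversely, when the powers `X₀, …, X₀ⁿ` form a frame, `X₀` is invertible, and the difference `D`
of two connections satisfying the condition on `X₀` has `D_Y(X₀) = A∘Y` for a fixed `A` and
`D_X(X₀∘P) = X₀∘D_X(P)`. On the frame `D` is therefore `W∘X∘Y` with `W = A∘X₀⁻¹`, so both families
are the special family generated by `∇^F`. -/

namespace IsFManifold

variable {R V : Type*} [CommRing R] [LieRing V] [Module R V] {m : V → V → V} {e : V}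

theorem mul_add (hF : IsFManifold R m e) (X Y Z : V) : m X (Y + Z) = m X Y + m X Z := by
  rw [hF.comm X, hF.add_left, hF.comm Y, hF.comm Z]

theorem mul_smul (hF : IsFManifold R m e) (f : R) (X Y : V) : m X (f • Y) = f • m X Y := by
  rw [hF.comm X, hF.smul_left, hF.comm Y]

theorem zero_mul (hF : IsFManifold R m e) (X : V) : m 0 X = 0 := by
  have h := hF.add_left 0 0 X
  rwa [add_zero, left_eq_add] at h

abbrev toCommRing (hF : IsFManifold R m e) : CommRing V :=
  { (inferInstance : AddCommGroup V) with
    mul := m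
    one := e
    mul_assoc := hF.assoc
    mul_comm := hF.comm
    one_mul := hF.unit
    mul_one := fun X => (hF.comm X e).trans (hF.unit X)
    left_distrib := hF.mul_add
    right_distrib := hF.add_left
    zero_mul := hF.zero_mul
    mul_zero := fun X => (hF.comm X 0).trans (hF.zero_mul X) }

def mulₗ (hF : IsFManifold R m e) (A : V) : V →ₗ[R] V where
  toFun := m A
  map_add' := hF.mul_add A
  map_smul' f X := hF.mul_smul f A X

theorem mpow_one (hF : IsFManifold R m e) (X : V) : mpow m e X 1 = X :=
  (hF.comm X e).trans (hF.unit X)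

theorem lie_unit_mul (hF : IsFManifold R m e) (Z W : V) :
    ⁅e, m Z W⁆ = m ⁅e, Z⁆ W + m Z ⁅e, W⁆ := by
  have h := hF.hertling_manin e e Z W
  simp only [hF.unit] at h
  rw [← sub_eq_zero, ← sub_sub]
  exact left_eq_add.mp h

theorem exists_mul_eq_unit {n : ℕ} {X0 : V} (hF : IsFManifold R m e)
    (b : Module.Basis (Fin n) R V) (hb : ∀ i : Fin n, b i = mpow m e X0 ((i : ℕ) + 1)) :
    ∃ J, m X0 J = e := by
  refine ⟨∑ i, b.repr e i • mpow m e X0 i, ?_⟩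
  change hF.mulₗ X0 _ = e
  conv_rhs => rw [← b.sum_repr e]
  simp only [map_sum, map_smul, hb]
  rfl

theorem covMul_comm (hF : IsFManifold R m e) (nabla : V → V → V) (X Y Z : V) :
    covMul nabla m X Y Z = covMul nabla m X Z Y := by
  simp only [covMul, hF.comm Y Z, hF.comm (nabla X Y) Z, hF.comm Y (nabla X Z)]
  abel

theorem isCompatible_of_symm (hF : IsFManifold R m e) {nabla : V → V → V}
    (h : ∀ X Y Z, covMul nabla m X Y Z = covMul nabla m Y X Z) : IsCompatible nabla m :=
  fun X Y Z => ⟨h X Y Z, hF.covMul_comm nabla X Y Z⟩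

end IsFManifold

theorem IsCompatible.covMul_mul_left {R V : Type*} [CommRing R] [LieRing V] [Module R V]
    {m : V → V → V} {e : V} {nabla : V → V → V} (hF : IsFManifold R m e)
    (h : IsCompatible nabla m) (A X Y Z : V) :
    covMul nabla m (m A X) Y Z =
      covMul nabla m A (m X Y) Z - m Y (covMul nabla m A X Z) + m A (covMul nabla m X Y Z) := by
  let _ := hF.toCommRing
  have hm : ∀ X Y : V, m X Y = X * Y := fun _ _ => rfl
  have s₁ := (h (A * X) Y Z).1
  have s₂ := (h Y A (X * Z)).1
  have s₃ := (h Y A X).1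
  have s₄ := (h Y X Z).1
  simp only [covMul, hm] at s₁ s₂ s₃ s₄ ⊢
  linear_combination (norm := ring_nf) s₁ + s₂ - Z * s₃ + A * s₄

def IsConnection.subₗ {R V : Type*} [CommRing R] [LieRing V] [Module R V]
    {S : SmoothSetting R V} {nabla₀ nabla₁ : V → V → V}
    (h₁ : IsConnection S nabla₁) (h₀ : IsConnection S nabla₀) (X : V) : V →ₗ[R] V where
  toFun U := nabla₁ X U - nabla₀ X U
  map_add' U W := by rw [h₁.add_right, h₀.add_right]; abel
  map_smul' f U := by rw [h₁.leibniz, h₀.leibniz, RingHom.id_apply, smul_sub]; abel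

namespace IsEventualIdentity

variable {R V : Type*} [CommRing R] [LieRing V] [Module R V] {m : V → V → V} {e ε εinv : V}

theorem mul_inv_mul (hF : IsFManifold R m e) (hev : IsEventualIdentity R m e ε εinv) (U : V) :
    m ε (m εinv U) = U := by
  rw [← hF.assoc, hev.1, hF.unit]

theorem inv_mul_mul (hF : IsFManifold R m e) (hev : IsEventualIdentity R m e ε εinv) (U : V) :
    m εinv (m ε U) = U := by
  rw [← hF.assoc, hF.comm εinv, hev.1, hF.unit]

/-- `L_ε(∘) = [e, ε]∘`, obtained from `L_ε(*) = 0` for the dual F-manifold. -/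
theorem lie_mul (hF : IsFManifold R m e) (hev : IsEventualIdentity R m e ε εinv) (A B : V) :
    ⁅ε, m A B⁆ = m ⁅ε, A⁆ B + m A ⁅ε, B⁆ - m (m A B) ⁅ε, e⁆ := by
  let _ := hF.toCommRing
  have hm : ∀ X Y : V, m X Y = X * Y := fun _ _ => rfl
  have he : e = 1 := rfl
  have hε : ε * εinv = 1 := hev.1
  have h₁ := hev.2.lie_unit_mul A (ε * B)
  have h₂ := hev.2.lie_unit_mul (ε * B) 1
  simp only [dualMul, hm, he] at h₁ h₂ ⊢
  rw [show A * (ε * B) * εinv = A * B by linear_combination A * B * hε] at h₁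
  rw [show ε * B * 1 * εinv = B by linear_combination B * hε] at h₂
  linear_combination h₁ - A * h₂ + (⁅ε, A⁆ * B - A * B * ⁅ε, (1 : V)⁆) * hε

theorem lie_mul_mul (hF : IsFManifold R m e) (hev : IsEventualIdentity R m e ε εinv) (a b : V) :
    ⁅m ε a, m ε b⁆ = m ε (⁅m ε a, b⁆ + ⁅a, m ε b⁆ - m ε ⁅a, b⁆) := by
  let _ := hF.toCommRing
  have hm : ∀ X Y : V, m X Y = X * Y := fun _ _ => rfl
  have h := hF.hertling_manin ε a ε b
  have ha := hev.lie_mul hF ε a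
  have hb := hev.lie_mul hF ε b
  simp only [hm, lie_self] at h ha hb ⊢
  rw [← lie_skew (ε * a) ε, ← lie_skew a ε] at h
  linear_combination h - b * ha + a * hb

theorem mpow_dualMul (hF : IsFManifold R m e) (hev : IsEventualIdentity R m e ε εinv)
    (X0 : V) (k : ℕ) : mpow (dualMul m εinv) ε (m ε X0) k = m ε (mpow m e X0 k) := by
  induction k with
  | zero => exact ((hF.comm ε e).trans (hF.unit ε)).symm
  | succ k ih =>
    change dualMul m εinv (m ε X0) (mpow (dualMul m εinv) ε (m ε X0) k) = _
    rw [ih]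
    let _ := hF.toCommRing
    have hε : ε * εinv = 1 := hev.1
    change ε * X0 * (ε * mpow m e X0 k) * εinv = ε * (X0 * mpow m e X0 k)
    linear_combination (ε * X0 * mpow m e X0 k) * hε

theorem exists_basis_dualMul_mpow {n : ℕ} {X0 : V} (hF : IsFManifold R m e)
    (hev : IsEventualIdentity R m e ε εinv) (b : Module.Basis (Fin n) R V)
    (hb : ∀ i : Fin n, b i = mpow m e X0 ((i : ℕ) + 1)) :
    ∃ bd : Module.Basis (Fin n) R V,
      ∀ i : Fin n, bd i = mpow (dualMul m εinv) ε (m ε X0) ((i : ℕ) + 1) :=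
  ⟨b.map (LinearEquiv.ofLinearMap (hF.mulₗ ε) (hF.mulₗ εinv)
      (LinearMap.ext (hev.mul_inv_mul hF)) (LinearMap.ext (hev.inv_mul_mul hF))),
    fun i => by rw [Module.Basis.map_apply, hb i, hev.mpow_dualMul hF]; rfl⟩

end IsEventualIdentity

/-- The family `S̃` of the theorem; its right-hand side is this family for `*` and `ε∘X₀`. -/
def IsAdaptedConn {R V : Type*} [CommRing R] [LieRing V] [Module R V]
    (S : SmoothSetting R V) (m : V → V → V) (X0 : V) (nabla : V → V → V) : Prop :=
  IsConnection S nabla ∧ IsTorsionFree nabla ∧ IsCompatible nabla m ∧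
    ∀ Y Z : V, m (nabla Y X0) Z = m (nabla Z X0) Y

namespace IsAdaptedConn

variable {R V : Type*} [CommRing R] [LieRing V] [Module R V] {S : SmoothSetting R V}
  {m : V → V → V} {e X0 : V} {nabla nabla₀ nabla₁ : V → V → V}

theorem add_mul (hF : IsFManifold R m e) (h : IsAdaptedConn S m X0 nabla) (W : V) :
    IsAdaptedConn S m X0 (fun X Y => nabla X Y + m (m W X) Y) := by
  obtain ⟨hc, ht, hcomp, hX0⟩ := h
  let _ := hF.toCommRing
  have hm : ∀ X Y : V, m X Y = X * Y := fun _ _ => rfl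
  refine ⟨⟨?_, ?_, ?_, ?_⟩, ?_, hF.isCompatible_of_symm ?_, ?_⟩
  · intro X Y Z
    simp only [hc.add_left, hF.mul_add, hF.add_left]
    abel
  · intro f X Y
    simp only [hc.smul_left, hF.mul_smul, hF.smul_left, smul_add]
  · intro X Y Z
    simp only [hc.add_right, hF.mul_add]
    abel
  · intro X f Y
    simp only [hc.leibniz, hF.mul_smul, smul_add]
    abel
  · intro X Y
    have h := ht X Y
    simp only [hm] at h ⊢
    linear_combination h
  · intro X Y Z
    have h := (hcomp X Y Z).1
    simp only [covMul, hm] at h ⊢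
    linear_combination h
  · intro Y Z
    have h := hX0 Y Z
    simp only [hm] at h ⊢
    linear_combination h

theorem sub_apply_right (hF : IsFManifold R m e) (h₀ : IsAdaptedConn S m X0 nabla₀)
    (h₁ : IsAdaptedConn S m X0 nabla₁) (Y : V) :
    nabla₁ Y X0 - nabla₀ Y X0 = m (nabla₁ e X0 - nabla₀ e X0) Y := by
  let _ := hF.toCommRing
  have hm : ∀ X Y : V, m X Y = X * Y := fun _ _ => rfl
  have he : e = 1 := rfl
  have u₁ := h₁.2.2.2 Y e
  have u₀ := h₀.2.2.2 Y e
  simp only [hm, he] at u₁ u₀ ⊢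
  linear_combination u₁ - u₀

/-- Compatibility lets `X` and `X₀` trade places, and by `sub_apply_right` and torsion-freeness
both `∇₁_{X₀} − ∇₀_{X₀}` and `∇₁_·(X₀) − ∇₀_·(X₀)` are multiplication by one vector field. -/
theorem sub_apply_mul (hF : IsFManifold R m e) (h₀ : IsAdaptedConn S m X0 nabla₀)
    (h₁ : IsAdaptedConn S m X0 nabla₁) (X P : V) :
    nabla₁ X (m X0 P) - nabla₀ X (m X0 P) = m X0 (nabla₁ X P - nabla₀ X P) := by
  obtain ⟨A, hA⟩ : ∃ A, ∀ Y, nabla₁ Y X0 - nabla₀ Y X0 = m A Y := ⟨_, sub_apply_right hF h₀ h₁⟩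
  let _ := hF.toCommRing
  have hm : ∀ X Y : V, m X Y = X * Y := fun _ _ => rfl
  simp only [hm] at hA
  have hD : ∀ U, nabla₁ X0 U - nabla₀ X0 U = A * U := fun U => by
    linear_combination hA U + h₁.2.1 X0 U - h₀.2.1 X0 U
  have c₁ := (h₁.2.2.1 X X0 P).1
  have c₀ := (h₀.2.2.1 X X0 P).1
  simp only [covMul, hm] at c₁ c₀ ⊢
  linear_combination c₁ - c₀ + P * hA X + hD (X * P) - P * hD X - X * hD P

theorem sub_apply_mpow (hF : IsFManifold R m e) (h₀ : IsAdaptedConn S m X0 nabla₀)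
    (h₁ : IsAdaptedConn S m X0 nabla₁) {W : V} (hW : m W X0 = nabla₁ e X0 - nabla₀ e X0)
    (X : V) (k : ℕ) :
    nabla₁ X (mpow m e X0 (k + 1)) - nabla₀ X (mpow m e X0 (k + 1)) =
      m (m W X) (mpow m e X0 (k + 1)) := by
  induction k with
  | zero =>
    rw [hF.mpow_one, sub_apply_right hF h₀ h₁, ← hW, hF.assoc, hF.comm X0, ← hF.assoc]
  | succ k ih =>
    change nabla₁ X (m X0 _) - nabla₀ X (m X0 _) = m (m W X) (m X0 _)
    rw [sub_apply_mul hF h₀ h₁, ih, ← hF.assoc, hF.comm X0, hF.assoc]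

theorem exists_eq_add_mul {n : ℕ} (hF : IsFManifold R m e) (b : Module.Basis (Fin n) R V)
    (hb : ∀ i : Fin n, b i = mpow m e X0 ((i : ℕ) + 1)) (h₀ : IsAdaptedConn S m X0 nabla₀)
    (h₁ : IsAdaptedConn S m X0 nabla₁) :
    ∃ W, ∀ X Y, nabla₁ X Y = nabla₀ X Y + m (m W X) Y := by
  obtain ⟨J, hJ⟩ := hF.exists_mul_eq_unit b hb
  set A := nabla₁ e X0 - nabla₀ e X0
  have hW : m (m A J) X0 = A := by rw [hF.assoc, hF.comm J, hJ, hF.comm, hF.unit]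
  refine ⟨m A J, fun X Y => ?_⟩
  have hext : h₁.1.subₗ h₀.1 X = hF.mulₗ (m (m A J) X) :=
    b.ext fun i => by rw [hb i]; exact sub_apply_mpow hF h₀ h₁ hW X i
  exact sub_eq_iff_eq_add'.mp (LinearMap.congr_fun hext Y)

end IsAdaptedConn

section SecondConn

variable {R V : Type*} [CommRing R] [LieRing V] [Module R V] {S : SmoothSetting R V}
  {m : V → V → V} {e ε εinv X0 : V} {nt : V → V → V}

theorem IsEventualIdentity.dualMul_mul_left (hF : IsFManifold R m e)
    (hev : IsEventualIdentity R m e ε εinv) (A B : V) : dualMul m εinv (m ε A) B = m A B := by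
  let _ := hF.toCommRing
  have hε : ε * εinv = 1 := hev.1
  change ε * A * B * εinv = A * B
  linear_combination A * B * hε

theorem IsEventualIdentity.dualMul_mul_right (hF : IsFManifold R m e)
    (hev : IsEventualIdentity R m e ε εinv) (A B : V) : dualMul m εinv A (m ε B) = m A B := by
  rw [hev.2.comm, hev.dualMul_mul_left hF, hF.comm]

theorem isConnection_secondConn (hF : IsFManifold R m e) (hev : IsEventualIdentity R m e ε εinv)
    (hc : IsConnection S nt) : IsConnection S (secondConn m ε εinv nt) := by
  constructor
  · intro X Y Z
    simp only [secondConn, hc.add_left, hF.mul_add]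
    abel
  · intro f X Y
    simp only [secondConn, hc.smul_left, hF.mul_smul, smul_sub]
  · intro X Y Z
    simp only [secondConn, hF.mul_add, hc.add_right, hc.add_left, hF.add_left]
    abel
  · intro X f Y
    simp only [secondConn, hF.mul_smul, hc.leibniz, hc.smul_left, hF.smul_left, hF.mul_add,
      smul_sub, hev.mul_inv_mul hF]
    abel

theorem isTorsionFree_secondConn (hF : IsFManifold R m e) (hev : IsEventualIdentity R m e ε εinv)
    (ht : IsTorsionFree nt) (hcomp : IsCompatible nt m) :
    IsTorsionFree (secondConn m ε εinv nt) := by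
  intro X Y
  obtain ⟨a, rfl⟩ : ∃ a, X = m ε a := ⟨m εinv X, (hev.mul_inv_mul hF X).symm⟩
  obtain ⟨b, rfl⟩ : ∃ b, Y = m ε b := ⟨m εinv Y, (hev.mul_inv_mul hF Y).symm⟩
  have hsymm : covMul nt m b ε a = covMul nt m a ε b := by
    rw [(hcomp b ε a).1, (hcomp ε b a).2, (hcomp ε a b).1]
  have hL := hev.lie_mul_mul hF a b
  simp only [secondConn, hev.inv_mul_mul hF]
  let _ := hF.toCommRing
  have hm : ∀ X Y : V, m X Y = X * Y := fun _ _ => rfl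
  simp only [covMul, hm] at hsymm hL ⊢
  linear_combination ε * ht (ε * a) b + ε * ht a (ε * b) + ε * hsymm - ε * ε * ht a b - hL

theorem covMul_secondConn (hF : IsFManifold R m e) (hev : IsEventualIdentity R m e ε εinv)
    (nt : V → V → V) (p q r : V) :
    covMul (secondConn m ε εinv nt) (dualMul m εinv) (m ε p) (m ε q) (m ε r) =
      m ε (covMul nt m (m ε p) q r) - m (m ε p) (nt (m q r) ε - m r (nt q ε) - m q (nt r ε)) := by
  have hqr : m εinv (m q (m ε r)) = m q r := by
    rw [hF.comm q, hF.assoc, hev.inv_mul_mul hF, hF.comm]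
  simp only [covMul, secondConn, hqr, hev.inv_mul_mul hF, hev.dualMul_mul_left hF,
    hev.dualMul_mul_right hF]
  let _ := hF.toCommRing
  have hm : ∀ X Y : V, m X Y = X * Y := fun _ _ => rfl
  simp only [hm]
  ring

theorem isCompatible_secondConn (hF : IsFManifold R m e) (hev : IsEventualIdentity R m e ε εinv)
    (ht : IsTorsionFree nt) (hcomp : IsCompatible nt m) :
    IsCompatible (secondConn m ε εinv nt) (dualMul m εinv) := by
  have hE : ∀ q r, nt (m q r) ε - m r (nt q ε) - m q (nt r ε) =
      covMul nt m ε q r + m (m q r) ⁅ε, e⁆ := fun q r => by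
    have hL := hev.lie_mul hF q r
    let _ := hF.toCommRing
    have hm : ∀ X Y : V, m X Y = X * Y := fun _ _ => rfl
    simp only [covMul, hm] at hL ⊢
    linear_combination -ht ε (q * r) + r * ht ε q + q * ht ε r - hL
  refine hev.2.isCompatible_of_symm fun X Y Z => ?_
  obtain ⟨p, rfl⟩ : ∃ p, X = m ε p := ⟨m εinv X, (hev.mul_inv_mul hF X).symm⟩
  obtain ⟨q, rfl⟩ : ∃ q, Y = m ε q := ⟨m εinv Y, (hev.mul_inv_mul hF Y).symm⟩
  obtain ⟨r, rfl⟩ : ∃ r, Z = m ε r := ⟨m εinv Z, (hev.mul_inv_mul hF Z).symm⟩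
  rw [covMul_secondConn hF hev, covMul_secondConn hF hev, hE, hE, hcomp.covMul_mul_left hF,
    hcomp.covMul_mul_left hF, (hcomp p q r).1, hF.comm p q]
  let _ := hF.toCommRing
  have hm : ∀ X Y : V, m X Y = X * Y := fun _ _ => rfl
  simp only [hm]
  ring

theorem isAdaptedConn_secondConn (hF : IsFManifold R m e) (hev : IsEventualIdentity R m e ε εinv)
    (h : IsAdaptedConn S m X0 nt) :
    IsAdaptedConn S (dualMul m εinv) (m ε X0) (secondConn m ε εinv nt) := by
  obtain ⟨hc, ht, hcomp, hX0⟩ := h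
  refine ⟨isConnection_secondConn hF hev hc, isTorsionFree_secondConn hF hev ht hcomp,
    isCompatible_secondConn hF hev ht hcomp, fun Y Z => ?_⟩
  simp only [secondConn, hev.inv_mul_mul hF, dualMul]
  let _ := hF.toCommRing
  have hm : ∀ X Y : V, m X Y = X * Y := fun _ _ => rfl
  have h := hX0 Y Z
  simp only [hm] at h ⊢
  linear_combination (ε * εinv) * h

end SecondConn

/-- **Example 5.6 ii.** In the setting of the previous example,
the dual `D_ε(S̃)` of the special family `S̃` of all torsion-free
`∘`-compatible connections with `∇̃_Y(X₀)∘Z = ∇̃_Z(X₀)∘Y` equals the special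
family of all torsion-free connections on the dual F-manifold `(M, *, ε)`
compatible with `*` and satisfying `∇_Y(ε∘X₀)*Z = ∇_Z(ε∘X₀)*Y`. -/
theorem statement9 {R V : Type*} [CommRing R] [LieRing V] [Module R V]
    (S : SmoothSetting R V) (m : V → V → V) (e ε εinv : V)
    (hF : IsFManifold R m e) (hev : IsEventualIdentity R m e ε εinv)
    (n : ℕ) (X0 : V)
    (hframe : ∃ b : Module.Basis (Fin n) R V, ∀ i : Fin n, b i = mpow m e X0 ((i : ℕ) + 1))
    (hex : ∃ nt : V → V → V, IsConnection S nt ∧ IsTorsionFree nt ∧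
      IsCompatible nt m ∧ ∀ Y Z : V, m (nt Y X0) Z = m (nt Z X0) Y) :
    dualFamilyOfSet m ε εinv
        { nt : V → V → V | IsConnection S nt ∧ IsTorsionFree nt ∧
          IsCompatible nt m ∧ ∀ Y Z : V, m (nt Y X0) Z = m (nt Z X0) Y } =
      { nd : V → V → V | IsConnection S nd ∧ IsTorsionFree nd ∧
        IsCompatible nd (dualMul m εinv) ∧
        ∀ Y Z : V, dualMul m εinv (nd Y (m ε X0)) Z =
          dualMul m εinv (nd Z (m ε X0)) Y } := by
  obtain ⟨nt₀, hnt₀⟩ := hex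
  obtain ⟨b, hb⟩ := hframe
  obtain ⟨bd, hbd⟩ := hev.exists_basis_dualMul_mpow hF b hb
  change dualFamilyOfSet m ε εinv {nt | IsAdaptedConn S m X0 nt} =
    {nd | IsAdaptedConn S (dualMul m εinv) (m ε X0) nd}
  ext nd
  constructor
  · rintro ⟨nt, hnt, W, rfl⟩
    exact (isAdaptedConn_secondConn hF hev hnt).add_mul hev.2 W
  · intro hnd
    obtain ⟨W, hW⟩ := (isAdaptedConn_secondConn hF hev hnt₀).exists_eq_add_mul hev.2 bd hbd hnd
    exact ⟨nt₀, hnt₀, W, funext₂ hW⟩
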